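/- Let X ⊂ ℤ be finite with |X| ≥ 2, let P be a linked pair partition of X, and let S ⊆ ℝ^d. Suppose for each s ∈ S and each e ∈ E_X a strongly measurable function F_{e,s} : (0,∞) → 𝓛(𝓗_at) is given such that for each r > 0 and e ∈ E_X the map s ↦ F_{e,s}(r) is continuous, and such that there is a constant C_F with ‖F_{e,s}(r)‖ ≤ C_F (r⁻¹ + 1) for all r > 0, s ∈ S, e ∈ E_X. Assume C₀ < ∞ and C₁ < ∞. Then for each r ≥ 0 the map s ↦ C_P(φ_s)(r) is continuous in operator norm, where C_P(φ_s)(r) denotes the contraction built from G and the family (F_{e,s}). -/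

import Mathlib

open MeasureTheory
open scoped InnerProductSpace

noncomputable section

/-- Momentum space `ℝ³`. -/
abbrev E3 : Type := EuclideanSpace ℝ (Fin 3)

/-- Junk-valued minimum of a finset of integers. -/
def fmin (s : Finset ℤ) : ℤ := WithTop.untopD 0 s.min

/-- Junk-valued maximum of a finset of integers. -/
def fmax (s : Finset ℤ) : ℤ := WithBot.unbotD 0 s.max

/-- `P` is a pair partition of the finite set `X ⊂ ℤ`. -/
def IsPairPartition (X : Finset ℤ) (P : Finset (Finset ℤ)) : Prop :=
  (∀ p ∈ P, p.card = 2) ∧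
  (∀ p ∈ P, ∀ q ∈ P, p ≠ q → Disjoint p q) ∧
  P.biUnion id = X

/-- Two distinct pairs `p, q` are linked. -/
def LinkedPairs (p q : Finset ℤ) : Prop :=
  p ≠ q ∧ (∃ a ∈ p, ∃ b ∈ q, ∃ c ∈ q, b ≤ a ∧ a ≤ c) ∧
    (∃ a ∈ q, ∃ b ∈ p, ∃ c ∈ p, b ≤ a ∧ a ≤ c)

/-- A pairing `P` is linked if any two of its pairs are joined by a finite
chain of consecutively linked pairs of `P`. -/
def IsLinked (P : Finset (Finset ℤ)) : Prop :=
  ∀ p ∈ P, ∀ q ∈ P, Relation.ReflTransGen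
    (fun a b => a ∈ P ∧ b ∈ P ∧ LinkedPairs a b) p q

/-- The next larger element `r_X(j)` of `X` after `j` (junk value if none). -/
def rX (X : Finset ℤ) (j : ℤ) : ℤ := fmin (X.filter fun y => j < y)

/-- The integration variable attached to the pair `p ∈ P`. -/
def kOf (P : Finset (Finset ℤ)) (k : ↥P → E3) (p : Finset ℤ) : E3 :=
  if h : p ∈ P then k ⟨p, h⟩ else 0

/-- The pair of `P` containing `j` (for a pair partition this is the unique
member of `P` containing `j`). -/
def thePair (P : Finset (Finset ℤ)) (j : ℤ) : Finset ℤ :=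
  (P.filter fun p => j ∈ p).biUnion id

/-- `G^♯_j(k)`: the adjoint `G(k_p)*` if `j = min p`, and `G(k_p)` if
`j = max p`, where `p ∈ P` is the pair containing `j`. -/
def Gsharp {𝓗 : Type*} [NormedAddCommGroup 𝓗] [InnerProductSpace ℂ 𝓗]
    [CompleteSpace 𝓗] (G : E3 → 𝓗 →L[ℂ] 𝓗) (P : Finset (Finset ℤ))
    (k : ↥P → E3) (j : ℤ) : 𝓗 →L[ℂ] 𝓗 :=
  if j = fmin (thePair P j) then
    ContinuousLinearMap.adjoint (G (kOf P k (thePair P j)))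
  else G (kOf P k (thePair P j))

/-- `|K_e|_P = ∑_{p ∈ P, min p ≤ min e, max e ≤ max p} |k_p|` for the edge
`e = {a, b}` with `a < b`. -/
def Ksum (P : Finset (Finset ℤ)) (k : ↥P → E3) (a b : ℤ) : ℝ :=
  ∑ p ∈ P.filter (fun p => fmin p ≤ a ∧ b ≤ fmax p), ‖kOf P k p‖

/-- The integrand of the contraction `𝒞_P(φ)(r)`: the operator product, over
`j ∈ X` in increasing order, of `G^♯_j(k) ⬝ F_{{j, r_X(j)}}(|K_{{j,r_X(j)}}|_P + r)`,
with the `F`-factor omitted for `j = max X`.  Here the edge label `F e` of the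
nearest-neighbour edge `e = {j, r_X(j)} ∈ E_X` is recorded as `F j`, indexed
by the left endpoint `j` of the edge. -/
def contractionIntegrand {𝓗 : Type*} [NormedAddCommGroup 𝓗]
    [InnerProductSpace ℂ 𝓗] [CompleteSpace 𝓗] (G : E3 → 𝓗 →L[ℂ] 𝓗)
    (X : Finset ℤ) (P : Finset (Finset ℤ)) (F : ℤ → ℝ → 𝓗 →L[ℂ] 𝓗)
    (r : ℝ) (k : ↥P → E3) : 𝓗 →L[ℂ] 𝓗 :=
  ((X.sort (· ≤ ·)).map fun j =>
    Gsharp G P k j *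
      (if j = fmax X then 1 else F j (Ksum P k j (rX X j) + r))).prod

/-- The contraction `𝒞_P(φ)(r)`: the Bochner integral of the contraction
integrand over `k ∈ (ℝ³)^P` (with respect to the product Lebesgue measure). -/
def contraction {𝓗 : Type*} [NormedAddCommGroup 𝓗]
    [InnerProductSpace ℂ 𝓗] [CompleteSpace 𝓗] (G : E3 → 𝓗 →L[ℂ] 𝓗)
    (X : Finset ℤ) (P : Finset (Finset ℤ)) (F : ℤ → ℝ → 𝓗 →L[ℂ] 𝓗)
    (r : ℝ) : 𝓗 →L[ℂ] 𝓗 :=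
  ∫ k : ↥P → E3, contractionIntegrand G X P F r k
section Comb

lemma fmin_eq {s : Finset ℤ} (h : s.Nonempty) : fmin s = s.min' h := by
  rw [fmin, ← Finset.coe_min' h, WithTop.untopD_coe]

lemma fmax_eq {s : Finset ℤ} (h : s.Nonempty) : fmax s = s.max' h := by
  rw [fmax, ← Finset.coe_max' h, WithBot.unbotD_coe]

lemma fmin_mem {s : Finset ℤ} (h : s.Nonempty) : fmin s ∈ s := by
  rw [fmin_eq h]; exact s.min'_mem h

lemma fmax_mem {s : Finset ℤ} (h : s.Nonempty) : fmax s ∈ s := by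
  rw [fmax_eq h]; exact s.max'_mem h

lemma fmin_le {s : Finset ℤ} {x : ℤ} (hx : x ∈ s) : fmin s ≤ x := by
  rw [fmin_eq ⟨x, hx⟩]; exact s.min'_le x hx

lemma le_fmax {s : Finset ℤ} {x : ℤ} (hx : x ∈ s) : x ≤ fmax s := by
  rw [fmax_eq ⟨x, hx⟩]; exact s.le_max' x hx

variable {X : Finset ℤ} {P : Finset (Finset ℤ)}

lemma pair_subset (hP : IsPairPartition X P) {p : Finset ℤ} (hp : p ∈ P) : p ⊆ X := by
  intro x hx
  rw [← hP.2.2]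
  exact Finset.mem_biUnion.2 ⟨p, hp, hx⟩

lemma exists_pair (hP : IsPairPartition X P) {j : ℤ} (hj : j ∈ X) : ∃ p ∈ P, j ∈ p := by
  rw [← hP.2.2] at hj
  simpa using Finset.mem_biUnion.1 hj

lemma thePair_eq (hP : IsPairPartition X P) {p : Finset ℤ} {j : ℤ} (hp : p ∈ P) (hj : j ∈ p) :
    thePair P j = p := by
  classical
  have hfil : P.filter (fun q => j ∈ q) = {p} := by
    apply Finset.eq_singleton_iff_unique_mem.2
    refine ⟨Finset.mem_filter.2 ⟨hp, hj⟩, ?_⟩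
    intro q hq
    rw [Finset.mem_filter] at hq
    by_contra hne
    exact (Finset.disjoint_left.1 (hP.2.1 q hq.1 p hp hne) hq.2) hj
  rw [thePair, hfil, Finset.singleton_biUnion]
  rfl

lemma thePair_mem (hP : IsPairPartition X P) {j : ℤ} (hj : j ∈ X) :
    thePair P j ∈ P ∧ j ∈ thePair P j := by
  obtain ⟨p, hp, hjp⟩ := exists_pair hP hj
  rw [thePair_eq hP hp hjp]
  exact ⟨hp, hjp⟩

lemma rX_spec (hXne : X.Nonempty) {j : ℤ} (hj : j ∈ X) (hne : j ≠ fmax X) :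
    rX X j ∈ X ∧ j < rX X j ∧ ∀ y ∈ X, j < y → rX X j ≤ y := by
  classical
  have hT : (X.filter fun y => j < y).Nonempty :=
    ⟨fmax X, Finset.mem_filter.2 ⟨fmax_mem hXne, lt_of_le_of_ne (le_fmax hj) hne⟩⟩
  have h1 := fmin_mem hT
  rw [Finset.mem_filter] at h1
  rw [rX]
  exact ⟨h1.1, h1.2, fun y hy hjy => fmin_le (Finset.mem_filter.2 ⟨hy, hjy⟩)⟩

lemma hall_cond (hP : IsPairPartition X P) (hL : IsLinked P) (hXne : X.Nonempty)
    (A : Finset ℤ) (hA : A ⊆ X.erase (fmax X)) :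
    A.card ≤ 2 * (A.biUnion (fun j => P.filter (fun p => fmin p ≤ j ∧ rX X j ≤ fmax p))).card := by
  classical
  set Q := A.biUnion (fun j => P.filter (fun p => fmin p ≤ j ∧ rX X j ≤ fmax p)) with hQdef
  set EQ := Q.biUnion id with hEQdef
  have hQP : Q ⊆ P := by
    intro q hq
    obtain ⟨j, _, hj⟩ := Finset.mem_biUnion.1 hq
    exact (Finset.mem_filter.1 hj).1
  have hEQcard : EQ.card ≤ 2 * Q.card := by
    calc EQ.card ≤ ∑ q ∈ Q, (id q).card := Finset.card_biUnion_le
      _ = ∑ _q ∈ Q, 2 := Finset.sum_congr rfl (fun q hq => hP.1 q (hQP hq))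
      _ = 2 * Q.card := by rw [Finset.sum_const, smul_eq_mul, mul_comm]
  set B := insert (fmax X) A with hBdef
  have hBX : B ⊆ X := by
    intro x hx
    rcases Finset.mem_insert.1 hx with rfl | hx
    · exact fmax_mem hXne
    · exact Finset.mem_of_mem_erase (hA hx)
  have claim : ∀ j ∈ A, ∃ x, x ∈ EQ ∧ j < x ∧ x ≤ fmin (B.filter (fun y => j < y)) := by
    intro j hj
    have hjE := Finset.mem_erase.1 (hA hj)
    have hjX : j ∈ X := hjE.2
    have hjne : j ≠ fmax X := hjE.1
    obtain ⟨hrX, hjr, hrmin⟩ := rX_spec hXne hjX hjne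
    set nj := fmin (B.filter (fun y => j < y)) with hnjdef
    have hBne : (B.filter (fun y => j < y)).Nonempty :=
      ⟨fmax X, Finset.mem_filter.2 ⟨Finset.mem_insert_self _ _,
        lt_of_le_of_ne (le_fmax hjX) hjne⟩⟩
    have hnjB0 := fmin_mem hBne
    rw [Finset.mem_filter] at hnjB0
    have hnjB : nj ∈ B := hnjB0.1
    have hjnj : j < nj := hnjB0.2
    have hnjX : nj ∈ X := hBX hnjB
    by_contra hcon
    push_neg at hcon
    set I := X.filter (fun x => j < x ∧ x ≤ nj) with hIdef
    have hrI : rX X j ∈ I :=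
      Finset.mem_filter.2 ⟨hrX, hjr, hrmin nj hnjX hjnj⟩
    have conf : ∀ p ∈ P, ∀ x ∈ p, x ∈ I → p ⊆ I := by
      intro p hp x hxp hxI
      have hxI' := Finset.mem_filter.1 hxI
      have hpQ : p ∉ Q := by
        intro hpQ
        have hxEQ : x ∈ EQ := Finset.mem_biUnion.2 ⟨p, hpQ, hxp⟩
        exact absurd (hcon x hxEQ hxI'.2.1) (not_lt.2 hxI'.2.2)
      intro y hyp
      have hyX : y ∈ X := pair_subset hP hp hyp
      refine Finset.mem_filter.2 ⟨hyX, ?_, ?_⟩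
      · by_contra hyj
        push_neg at hyj
        have hsp : p ∈ P.filter (fun p => fmin p ≤ j ∧ rX X j ≤ fmax p) :=
          Finset.mem_filter.2 ⟨hp, le_trans (fmin_le hyp) hyj,
            le_trans (hrmin x hxI'.1 hxI'.2.1) (le_fmax hxp)⟩
        exact hpQ (Finset.mem_biUnion.2 ⟨j, hj, hsp⟩)
      · by_contra hynj
        push_neg at hynj
        rcases Finset.mem_insert.1 hnjB with hfx | hnjA
        · have := le_fmax hyX
          omega
        · have hnjE := Finset.mem_erase.1 (hA hnjA)
          obtain ⟨_, _, hrmin'⟩ := rX_spec hXne hnjE.2 hnjE.1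
          have hsp : p ∈ P.filter (fun p => fmin p ≤ nj ∧ rX X nj ≤ fmax p) :=
            Finset.mem_filter.2 ⟨hp, le_trans (fmin_le hxp) hxI'.2.2,
              le_trans (hrmin' y hyX hynj) (le_fmax hyp)⟩
          exact hpQ (Finset.mem_biUnion.2 ⟨nj, hnjA, hsp⟩)
    obtain ⟨hq0P, hjq0⟩ := thePair_mem hP hjX
    obtain ⟨hp0P, hrp0⟩ := thePair_mem hP hrX
    have hchain := hL _ hp0P _ hq0P
    have hsub : thePair P j ⊆ I := by
      have : ∀ z, Relation.ReflTransGen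
          (fun a b => a ∈ P ∧ b ∈ P ∧ LinkedPairs a b) (thePair P (rX X j)) z → z ⊆ I := by
        intro z hz
        induction hz with
        | refl => exact conf _ hp0P _ hrp0 hrI
        | tail _ hstep ih =>
          obtain ⟨hz1, hz2, hlink⟩ := hstep
          obtain ⟨_, _, a, ha, b, hb, c, hc, hba, hac⟩ := hlink
          have hbI := Finset.mem_filter.1 (ih hb)
          have hcI := Finset.mem_filter.1 (ih hc)
          have haX : a ∈ X := pair_subset hP hz2 ha
          have haI : a ∈ I := Finset.mem_filter.2
            ⟨haX, lt_of_lt_of_le hbI.2.1 hba, le_trans hac hcI.2.2⟩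
          exact conf _ hz2 _ ha haI
      exact this _ hchain
    have := Finset.mem_filter.1 (hsub hjq0)
    omega
  choose e hemem helt hele using claim
  have hinj : A.card ≤ EQ.card := by
    apply Finset.card_le_card_of_injOn (fun j => if h : j ∈ A then e j h else 0)
    · intro j hj
      simp only [Finset.mem_coe] at hj ⊢
      rw [dif_pos hj]
      exact hemem j hj
    · intro j hj j' hj' heq
      simp only [Finset.mem_coe] at hj hj'
      simp only [dif_pos hj, dif_pos hj'] at heq
      by_contra hne
      have key : ∀ (a : ℤ) (ha : a ∈ A) (a' : ℤ) (ha' : a' ∈ A), a < a' →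
          e a ha ≠ e a' ha' := by
        intro a ha a' ha' haa' hE
        have h1 : e a ha ≤ a' := le_trans (hele a ha)
          (fmin_le (Finset.mem_filter.2 ⟨Finset.mem_insert_of_mem ha', haa'⟩))
        have h2 : a' < e a' ha' := helt a' ha'
        omega
      rcases lt_trichotomy j j' with h | h | h
      · exact key j hj j' hj' h heq
      · exact hne h
      · exact key j' hj' j hj h heq.symm
  omega

end Comb
section Asg
variable {X : Finset ℤ} {P : Finset (Finset ℤ)}

lemma exists_assignment (hP : IsPairPartition X P) (hL : IsLinked P) (hXne : X.Nonempty) :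
    ∃ m : ℤ → Finset ℤ,
      (∀ j ∈ X.erase (fmax X), m j ∈ P ∧ fmin (m j) ≤ j ∧ rX X j ≤ fmax (m j)) ∧
      (∀ p : Finset ℤ, ((X.erase (fmax X)).filter (fun j => m j = p)).card ≤ 2) := by
  classical
  set D := X.erase (fmax X) with hD
  set t : ↥D → Finset (Finset ℤ × Bool) := fun j =>
    (P.filter (fun p => fmin p ≤ j.1 ∧ rX X j.1 ≤ fmax p)) ×ˢ (Finset.univ : Finset Bool)
    with ht
  have hall : ∀ s : Finset ↥D, s.card ≤ (s.biUnion t).card := by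
    intro s
    have h1 : s.biUnion t =
        ((s.image Subtype.val).biUnion
          (fun j => P.filter (fun p => fmin p ≤ j ∧ rX X j ≤ fmax p)))
        ×ˢ (Finset.univ : Finset Bool) := by
      ext x
      constructor
      · intro hx
        obtain ⟨j, hj, hx⟩ := Finset.mem_biUnion.1 hx
        simp only [ht] at hx
        rw [Finset.mem_product] at hx
        exact Finset.mem_product.2 ⟨Finset.mem_biUnion.2
          ⟨j.1, Finset.mem_image_of_mem _ hj, hx.1⟩, Finset.mem_univ _⟩
      · intro hx
        rw [Finset.mem_product] at hx
        obtain ⟨v, hv, hx1⟩ := Finset.mem_biUnion.1 hx.1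
        obtain ⟨j, hj, rfl⟩ := Finset.mem_image.1 hv
        refine Finset.mem_biUnion.2 ⟨j, hj, ?_⟩
        simp only [ht]
        exact Finset.mem_product.2 ⟨hx1, Finset.mem_univ _⟩
    rw [h1, Finset.card_product, Finset.card_univ, Fintype.card_bool]
    have h2 : s.card = (s.image Subtype.val).card :=
      (Finset.card_image_of_injective s Subtype.val_injective).symm
    rw [h2]
    have h3 := hall_cond hP hL hXne (s.image Subtype.val)
      (by
        intro x hx
        obtain ⟨j, _, rfl⟩ := Finset.mem_image.1 hx
        exact j.2)
    omega
  obtain ⟨f, hfinj, hft⟩ := (Finset.all_card_le_biUnion_card_iff_existsInjective' t).1 hall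
  refine ⟨fun j => if h : j ∈ D then (f ⟨j, h⟩).1 else ∅, ?_, ?_⟩
  · intro j hj
    simp only [dif_pos hj]
    have := hft ⟨j, hj⟩
    rw [ht, Finset.mem_product, Finset.mem_filter] at this
    exact ⟨this.1.1, this.1.2.1, this.1.2.2⟩
  · intro p
    have h4 : ∀ j ∈ D.filter (fun j => (if h : j ∈ D then (f ⟨j, h⟩).1 else ∅) = p),
        (fun j => if h : j ∈ D then (f ⟨j, h⟩).2 else false) j ∈ (Finset.univ : Finset Bool) :=
      fun _ _ => Finset.mem_univ _
    have h5 : Set.InjOn (fun j => if h : j ∈ D then (f ⟨j, h⟩).2 else false)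
        (D.filter (fun j => (if h : j ∈ D then (f ⟨j, h⟩).1 else ∅) = p)) := by
      intro a ha a' ha' hE
      simp only [Finset.coe_filter, Set.mem_setOf_eq] at ha ha'
      obtain ⟨haD, hap⟩ := ha
      obtain ⟨haD', hap'⟩ := ha'
      simp only [dif_pos haD, dif_pos haD'] at hap hap' hE
      have : f ⟨a, haD⟩ = f ⟨a', haD'⟩ := Prod.ext (hap.trans hap'.symm) hE
      exact congrArg Subtype.val (hfinj this)
    have := Finset.card_le_card_of_injOn _ h4 h5
    simpa using this

end Asg
section Helpers

lemma sort_map_prod {M : Type*} [CommMonoid M] (X : Finset ℤ) (f : ℤ → M) :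
    ((X.sort (· ≤ ·)).map f).prod = ∏ j ∈ X, f j := by
  rw [Finset.prod_eq_multiset_prod, ← Finset.sort_eq X (· ≤ ·), Multiset.map_coe,
    Multiset.prod_coe]

lemma aesm_listProd {α E : Type*} {mα : MeasurableSpace α} {μ : MeasureTheory.Measure α}
    [NormedRing E] (l : List ℤ) (fac : ℤ → α → E)
    (h : ∀ j ∈ l, MeasureTheory.AEStronglyMeasurable (fac j) μ) :
    MeasureTheory.AEStronglyMeasurable (fun a => (l.map (fun j => fac j a)).prod) μ := by
  induction l with
  | nil => simpa using MeasureTheory.aestronglyMeasurable_const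
  | cons a l ih =>
    simp only [List.map_cons, List.prod_cons]
    exact (h a (by simp)).mul (ih (fun j hj => h j (by simp [hj])))

lemma cwa_listProd {Y E : Type*} [TopologicalSpace Y] [NormedRing E] {S : Set Y} {y₀ : Y}
    (l : List ℤ) (fac : ℤ → Y → E)
    (h : ∀ j ∈ l, ContinuousWithinAt (fac j) S y₀) :
    ContinuousWithinAt (fun s => (l.map (fun j => fac j s)).prod) S y₀ := by
  induction l with
  | nil => simpa using continuousWithinAt_const
  | cons a l ih =>
    simp only [List.map_cons, List.prod_cons]
    exact (h a (by simp)).mul (ih (fun j hj => h j (by simp [hj])))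

example {H : Type} [NormedAddCommGroup H] [InnerProductSpace ℂ H] [CompleteSpace H]
    [Nontrivial H] : ‖(1 : H →L[ℂ] H)‖ = 1 := norm_one

example : NullSingletonClass (MeasureTheory.volume : MeasureTheory.Measure E3) := inferInstance

example {H : Type} [NormedAddCommGroup H] [InnerProductSpace ℂ H] [CompleteSpace H]
    (T : H →L[ℂ] H) : ‖ContinuousLinearMap.adjoint T‖ = ‖T‖ :=
  LinearIsometryEquiv.norm_map ContinuousLinearMap.adjoint T
end Helpers

/-- **Lemma 4.9 (b): continuity of linked Feynman graphs in a parameter.**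
Let `P` be a linked pair partition of `X`, `|X| ≥ 2`, and let `S ⊆ ℝᵈ`.
Suppose the edge labels `F_{e,s}` depend on a parameter `s ∈ S`, are strongly
measurable in `r`, continuous in `s` for each fixed `r > 0`, and satisfy the
uniform bound `‖F_{e,s}(r)‖ ≤ C_F (r⁻¹ + 1)`.  If `C₀` and `C₁` are finite,
then for each `r ≥ 0` the map `s ↦ 𝒞_P(φ_s)(r)` is continuous in operator
norm. -/
theorem stmt9 {𝓗 : Type*} [NormedAddCommGroup 𝓗] [InnerProductSpace ℂ 𝓗]
    [CompleteSpace 𝓗]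
    (G : E3 → 𝓗 →L[ℂ] 𝓗) (hGmeas : StronglyMeasurable G)
    (hC0 : Integrable (fun k : E3 => (‖k‖⁻¹ + 1) * ‖G k‖ ^ 2))
    (hC1 : Integrable (fun k : E3 => (‖k‖⁻¹ + 1) ^ 2 * ‖G k‖ ^ 2))
    (X : Finset ℤ) (hX : 2 ≤ X.card)
    (P : Finset (Finset ℤ)) (hP : IsPairPartition X P) (hPlinked : IsLinked P)
    (d : ℕ) (S : Set (Fin d → ℝ))
    (F : (Fin d → ℝ) → ℤ → ℝ → 𝓗 →L[ℂ] 𝓗)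
    (hFmeas : ∀ s ∈ S, ∀ j ∈ X, j ≠ fmax X →
      StronglyMeasurable (fun r : Set.Ioi (0 : ℝ) => F s j r))
    (hFcont : ∀ j ∈ X, j ≠ fmax X → ∀ r : ℝ, 0 < r →
      ContinuousOn (fun s => F s j r) S)
    (CF : ℝ)
    (hFbound : ∀ s ∈ S, ∀ j ∈ X, j ≠ fmax X → ∀ r : ℝ, 0 < r →
      ‖F s j r‖ ≤ CF * (r⁻¹ + 1)) :
    ∀ r : ℝ, 0 ≤ r →
      ContinuousOn (fun s => contraction G X P (F s) r) S := by
  classical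
  intro r hr
  rcases S.eq_empty_or_nonempty with rfl | ⟨s1, hs1⟩
  · exact continuousOn_empty _
  rcases subsingleton_or_nontrivial 𝓗 with hsub | hnt
  · have hops : Subsingleton (𝓗 →L[ℂ] 𝓗) :=
      ⟨fun f g => ContinuousLinearMap.ext fun x => Subsingleton.elim _ _⟩
    have : (fun s => contraction G X P (F s) r) = fun _ => 0 :=
      funext fun s => Subsingleton.elim _ _
    rw [this]
    exact continuousOn_const
  have hXne : X.Nonempty := Finset.card_pos.1 (by omega)
  have hfmaxX : fmax X ∈ X := fmax_mem hXne
  have hCF : (0:ℝ) ≤ CF := by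
    have hminX : fmin X ∈ X := fmin_mem hXne
    have hminmax : fmin X ≠ fmax X := by
      have hlt : 1 < X.card := lt_of_lt_of_le one_lt_two hX
      obtain ⟨a, ha, b, hb, hab⟩ := Finset.one_lt_card.1 hlt
      have h1 := fmin_le ha
      have h2 := fmin_le hb
      have h3 := le_fmax ha
      have h4 := le_fmax hb
      omega
    have hb := hFbound s1 hs1 (fmin X) hminX hminmax 1 one_pos
    have hn := norm_nonneg (F s1 (fmin X) 1)
    norm_num at hb
    linarith
  obtain ⟨m, hm1, hm2⟩ := exists_assignment hP hPlinked hXne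
  have hgood : ∀ᵐ k : ↥P → E3, ∀ p : ↥P, k p ≠ 0 := by
    rw [MeasureTheory.ae_all_iff]
    intro p
    have h0 : MeasureTheory.volume {k : ↥P → E3 | k p = 0} = 0 := by
      have heq : {k : ↥P → E3 | k p = 0} = Function.eval p ⁻¹' {0} := rfl
      rw [heq, MeasureTheory.volume_pi]
      exact MeasureTheory.Measure.pi_eval_preimage_null _ (MeasureTheory.measure_singleton 0)
    rw [MeasureTheory.ae_iff]
    simpa using h0
  have kfacts : ∀ (k : ↥P → E3), (∀ p : ↥P, k p ≠ 0) → ∀ j ∈ X, j ≠ fmax X →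
      (0 < ‖kOf P k (m j)‖ ∧ ‖kOf P k (m j)‖ ≤ Ksum P k j (rX X j)) := by
    intro k hk j hjX hje
    have hjD : j ∈ X.erase (fmax X) := Finset.mem_erase.2 ⟨hje, hjX⟩
    obtain ⟨hmP, hsp1, hsp2⟩ := hm1 j hjD
    constructor
    · rw [kOf, dif_pos hmP]
      exact norm_pos_iff.2 (hk _)
    · unfold Ksum
      exact Finset.single_le_sum (f := fun p => ‖kOf P k p‖) (fun q _ => norm_nonneg _)
        (Finset.mem_filter.2 ⟨hmP, hsp1, hsp2⟩)
  have kpos : ∀ (k : ↥P → E3), (∀ p : ↥P, k p ≠ 0) → ∀ j ∈ X, j ≠ fmax X →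
      0 < Ksum P k j (rX X j) + r := by
    intro k hk j hjX hje
    obtain ⟨h1, h2⟩ := kfacts k hk j hjX hje
    linarith
  set bound : (↥P → E3) → ℝ :=
    fun k => (CF+1)^(X.card - 1) * ∏ p : ↥P, ((‖k p‖⁻¹ + 1)^2 * ‖G (k p)‖^2) with hbdef
  have hbound_int : Integrable bound :=
    (MeasureTheory.Integrable.fintype_prod (f := fun _ : ↥P => fun v : E3 =>
      (‖v‖⁻¹ + 1)^2 * ‖G v‖^2) (fun _ => hC1)).const_mul _
  have haesm : ∀ s ∈ S,
      AEStronglyMeasurable (fun k => contractionIntegrand G X P (F s) r k)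
        (MeasureTheory.volume) := by
    intro s hs
    unfold contractionIntegrand
    refine aesm_listProd (X.sort (· ≤ ·))
      (fun j k => Gsharp G P k j *
        (if j = fmax X then 1 else F s j (Ksum P k j (rX X j) + r))) ?_
    intro j hj
    have hjX : j ∈ X := (Finset.mem_sort _).1 hj
    obtain ⟨hpP, hjp⟩ := thePair_mem hP hjX
    have hGk : StronglyMeasurable (fun k : ↥P → E3 => G (kOf P k (thePair P j))) := by
      have heq : (fun k : ↥P → E3 => G (kOf P k (thePair P j)))
          = G ∘ (fun k : ↥P → E3 => k ⟨thePair P j, hpP⟩) := by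
        funext k
        simp only [Function.comp_apply, kOf, dif_pos hpP]
      rw [heq]
      exact hGmeas.comp_measurable (measurable_pi_apply _)
    have hG : AEStronglyMeasurable (fun k : ↥P → E3 => Gsharp G P k j)
        MeasureTheory.volume := by
      unfold Gsharp
      split_ifs
      · exact ((ContinuousLinearMap.adjoint (𝕜 := ℂ) (E := 𝓗)
          (F := 𝓗)).continuous.comp_stronglyMeasurable hGk).aestronglyMeasurable
      · exact hGk.aestronglyMeasurable
    by_cases hje : j = fmax X
    · simp only [if_pos hje]
      exact hG.mul aestronglyMeasurable_const
    · simp only [if_neg hje]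
      have hw : Measurable (fun k : ↥P → E3 => Ksum P k j (rX X j) + r) := by
        apply Measurable.add_const
        unfold Ksum
        apply Finset.measurable_sum
        intro p hp
        have hpP' : p ∈ P := (Finset.mem_filter.1 hp).1
        have heq : (fun k : ↥P → E3 => ‖kOf P k p‖) = fun k => ‖k ⟨p, hpP'⟩‖ := by
          funext k
          rw [kOf, dif_pos hpP']
        rw [heq]
        exact (measurable_pi_apply _).norm
      have hu : StronglyMeasurable
          (Function.extend (Subtype.val : Set.Ioi (0:ℝ) → ℝ)
            (fun x : Set.Ioi (0:ℝ) => F s j x) (fun _ => 0)) :=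
        (MeasurableEmbedding.subtype_coe measurableSet_Ioi).stronglyMeasurable_extend
          (hFmeas s hs j hjX hje) stronglyMeasurable_const
      have hF : AEStronglyMeasurable
          (fun k : ↥P → E3 => F s j (Ksum P k j (rX X j) + r)) MeasureTheory.volume := by
        refine (hu.comp_measurable hw).aestronglyMeasurable.congr ?_
        filter_upwards [hgood] with k hk
        have hpos := kpos k hk j hjX hje
        show Function.extend _ _ _ (Ksum P k j (rX X j) + r) = _
        have heq2 : (Ksum P k j (rX X j) + r)
            = ((⟨Ksum P k j (rX X j) + r, hpos⟩ : Set.Ioi (0:ℝ)) : ℝ) := rfl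
        rw [heq2, Subtype.val_injective.extend_apply]
      exact hG.mul hF
  haveI := hnt
  have hnormbound : ∀ s ∈ S, ∀ (k : ↥P → E3), (∀ p : ↥P, k p ≠ 0) →
      ‖contractionIntegrand G X P (F s) r k‖ ≤ bound k := by
    intro s hs k hk
    have hconv : ∀ f : E3 → ℝ, ∏ p ∈ P, f (kOf P k p) = ∏ p : ↥P, f (k p) := by
      intro f
      rw [← Finset.prod_coe_sort P (fun p => f (kOf P k p))]
      exact Finset.prod_congr rfl (fun i _ => by rw [kOf, dif_pos i.2])
    have hGnorm : ∀ j : ℤ, ‖Gsharp G P k j‖ = ‖G (kOf P k (thePair P j))‖ := by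
      intro j
      unfold Gsharp
      split_ifs
      · exact LinearIsometryEquiv.norm_map ContinuousLinearMap.adjoint _
      · rfl
    set c : ℤ → ℝ := fun j => if j = fmax X then 1 else (CF+1) * (‖kOf P k (m j)‖⁻¹ + 1)
      with hcdef
    have h2 : ∀ j ∈ X,
        ‖Gsharp G P k j * (if j = fmax X then 1 else F s j (Ksum P k j (rX X j) + r))‖
          ≤ ‖G (kOf P k (thePair P j))‖ * c j := by
      intro j hjX
      refine le_trans (norm_mul_le _ _) ?_
      rw [hGnorm j]
      refine mul_le_mul_of_nonneg_left ?_ (norm_nonneg _)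
      by_cases hje : j = fmax X
      · rw [if_pos hje]
        have : c j = 1 := by rw [hcdef]; simp [hje]
        rw [this, norm_one]
      · rw [if_neg hje]
        have hcj : c j = (CF+1) * (‖kOf P k (m j)‖⁻¹ + 1) := by rw [hcdef]; simp [hje]
        rw [hcj]
        obtain ⟨hpos, hle⟩ := kfacts k hk j hjX hje
        have hpos2 : 0 < Ksum P k j (rX X j) + r := by linarith
        refine le_trans (hFbound s hs j hjX hje _ hpos2) ?_
        have hinv : (Ksum P k j (rX X j) + r)⁻¹ ≤ ‖kOf P k (m j)‖⁻¹ := by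
          apply inv_anti₀ hpos
          linarith
        have hnn : (0:ℝ) ≤ ‖kOf P k (m j)‖⁻¹ := inv_nonneg.2 (norm_nonneg _)
        nlinarith
    have h4 : ∏ j ∈ X, ‖G (kOf P k (thePair P j))‖ = ∏ p ∈ P, ‖G (kOf P k p)‖^2 := by
      rw [← Finset.prod_fiberwise_of_maps_to (fun j hj => (thePair_mem hP hj).1)
        (fun j => ‖G (kOf P k (thePair P j))‖)]
      refine Finset.prod_congr rfl ?_
      intro p hp
      have hfib : X.filter (fun j => thePair P j = p) = p := by
        ext x
        rw [Finset.mem_filter]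
        constructor
        · rintro ⟨hxX, hx⟩
          rw [← hx]
          exact (thePair_mem hP hxX).2
        · intro hxp
          exact ⟨pair_subset hP hp hxp, thePair_eq hP hp hxp⟩
      calc ∏ j ∈ X.filter (fun j => thePair P j = p), ‖G (kOf P k (thePair P j))‖
          = ∏ j ∈ X.filter (fun j => thePair P j = p), ‖G (kOf P k p)‖ :=
            Finset.prod_congr rfl (fun j hj => by rw [(Finset.mem_filter.1 hj).2])
        _ = ‖G (kOf P k p)‖ ^ 2 := by rw [Finset.prod_const, hfib, hP.1 p hp]
    have h5 : ∏ j ∈ X, c j ≤ (CF+1)^(X.card-1) * ∏ p ∈ P, (‖kOf P k p‖⁻¹+1)^2 := by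
      have e1 : ∏ j ∈ X, c j = ∏ j ∈ X.erase (fmax X), c j := by
        rw [← Finset.mul_prod_erase X c hfmaxX]
        have hc1 : c (fmax X) = 1 := by rw [hcdef]; simp
        rw [hc1, one_mul]
      have e2 : ∀ j ∈ X.erase (fmax X), c j = (CF+1) * (‖kOf P k (m j)‖⁻¹ + 1) := by
        intro j hj
        rw [hcdef]
        simp [(Finset.mem_erase.1 hj).1]
      rw [e1, Finset.prod_congr rfl e2, Finset.prod_mul_distrib, Finset.prod_const,
        Finset.card_erase_of_mem hfmaxX]
      refine mul_le_mul_of_nonneg_left ?_ (by positivity)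
      rw [← Finset.prod_fiberwise_of_maps_to (fun j hj => (hm1 j hj).1)
        (fun j => ‖kOf P k (m j)‖⁻¹ + 1)]
      refine Finset.prod_le_prod (fun p _ => Finset.prod_nonneg (fun j _ => by positivity)) ?_
      intro p hp
      calc ∏ j ∈ (X.erase (fmax X)).filter (fun j => m j = p), (‖kOf P k (m j)‖⁻¹ + 1)
          = ∏ j ∈ (X.erase (fmax X)).filter (fun j => m j = p), (‖kOf P k p‖⁻¹ + 1) :=
            Finset.prod_congr rfl (fun j hj => by rw [(Finset.mem_filter.1 hj).2])
        _ = (‖kOf P k p‖⁻¹ + 1) ^ ((X.erase (fmax X)).filter (fun j => m j = p)).card :=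
            Finset.prod_const _
        _ ≤ (‖kOf P k p‖⁻¹ + 1) ^ 2 :=
            pow_le_pow_right₀ (le_add_of_nonneg_left (inv_nonneg.2 (norm_nonneg _))) (hm2 p)
    unfold contractionIntegrand
    calc ‖(List.map (fun j => Gsharp G P k j *
            (if j = fmax X then 1 else F s j (Ksum P k j (rX X j) + r)))
            (Finset.sort X (· ≤ ·))).prod‖
        ≤ (List.map norm (List.map (fun j => Gsharp G P k j *
            (if j = fmax X then 1 else F s j (Ksum P k j (rX X j) + r)))
            (Finset.sort X (· ≤ ·)))).prod := List.norm_prod_le _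
      _ = ∏ j ∈ X, ‖Gsharp G P k j *
            (if j = fmax X then 1 else F s j (Ksum P k j (rX X j) + r))‖ := by
          rw [List.map_map]
          exact sort_map_prod X _
      _ ≤ ∏ j ∈ X, (‖G (kOf P k (thePair P j))‖ * c j) :=
          Finset.prod_le_prod (fun j _ => norm_nonneg _) h2
      _ = (∏ j ∈ X, ‖G (kOf P k (thePair P j))‖) * ∏ j ∈ X, c j := Finset.prod_mul_distrib
      _ ≤ (∏ j ∈ X, ‖G (kOf P k (thePair P j))‖) *
            ((CF+1)^(X.card-1) * ∏ p ∈ P, (‖kOf P k p‖⁻¹+1)^2) :=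
          mul_le_mul_of_nonneg_left h5 (Finset.prod_nonneg fun _ _ => norm_nonneg _)
      _ = (CF+1)^(X.card-1) * ∏ p ∈ P, ((‖kOf P k p‖⁻¹+1)^2 * ‖G (kOf P k p)‖^2) := by
          rw [h4, Finset.prod_mul_distrib]
          ring
      _ = bound k := by
          rw [hbdef, hconv (fun v => (‖v‖⁻¹+1)^2 * ‖G v‖^2)]
  intro s₀ hs₀
  have hcwa : ∀ᵐ k : ↥P → E3,
      ContinuousWithinAt (fun s => contractionIntegrand G X P (F s) r k) S s₀ := by
    filter_upwards [hgood] with k hk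
    show ContinuousWithinAt (fun s => ((X.sort (· ≤ ·)).map (fun j => Gsharp G P k j *
      (if j = fmax X then 1 else F s j (Ksum P k j (rX X j) + r)))).prod) S s₀
    refine cwa_listProd (X.sort (· ≤ ·))
      (fun j s => Gsharp G P k j *
        (if j = fmax X then 1 else F s j (Ksum P k j (rX X j) + r))) ?_
    intro j hj
    have hjX := (Finset.mem_sort _).1 hj
    by_cases hje : j = fmax X
    · simp only [if_pos hje]
      exact continuousWithinAt_const
    · simp only [if_neg hje]
      exact continuousWithinAt_const.mul
        ((hFcont j hjX hje _ (kpos k hk j hjX hje)).continuousWithinAt hs₀)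
  show ContinuousWithinAt (fun s => ∫ k : ↥P → E3, contractionIntegrand G X P (F s) r k) S s₀
  apply MeasureTheory.continuousWithinAt_of_dominated (bound := bound)
  · filter_upwards [self_mem_nhdsWithin] with s hs using haesm s hs
  · filter_upwards [self_mem_nhdsWithin] with s hs
    filter_upwards [hgood] with k hk using hnormbound s hs k hk
  · exact hbound_int
  · exact hcwa
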